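/- arXiv:2401.04941 — 2 statements merged into one kernel-verified Lean document; each statement's English description precedes it below -/
import Mathlib

section
/- Let q be a prime power, let b, n, N, w be positive integers with b ≤ n, and let φ : F_q^b → F_q^N be an F_q-linear map such that wt_H(φ(a)) = w for every nonzero a ∈ F_q^b. Let C ⊆ F_q^n be an F_q-linear code, and let E(C) = { (φ(c̄_0), φ(c̄_1), …, φ(c̄_{n-1})) : c ∈ C } ⊆ F_q^{Nn}, where c̄_i = (c_i, …, c_{i+b-1}) with subscripts modulo n. Then for every nonnegative integer v, the number of codewords c ∈ C with wt_b(c) = v equals the number of codewords u ∈ E(C) with wt_H(u) = w·v. -/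
/-- The `b`-symbol weight of a vector `c ∈ F^n` (coordinates indexed cyclically by `ZMod n`). -/
noncomputable def bWt {n : ℕ} {F : Type*} [Zero F] (b : ℕ) (c : ZMod n → F) : ℕ :=
  Nat.card {i : ZMod n | ∃ j < b, c (i + (j : ZMod n)) ≠ 0}

/-- The Hamming weight of a vector: its number of nonzero coordinates. -/
noncomputable def hWt {ι : Type*} {F : Type*} [Zero F] (u : ι → F) : ℕ :=
  Nat.card {i : ι | u i ≠ 0}

/-!
The map `c ↦ E(c)` is injective, since `φ` has trivial kernel and the window `c̄_i` starts
with `c_i`. Block `i` of `E(c)` is `φ(c̄_i)`, which has weight `w` if `c̄_i ≠ 0` and weight `0`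
otherwise, so `wt_H(E(c)) = w · wt_b(c)`; as `w > 0`, `E` restricts to a bijection between
the codewords of `b`-weight `v` and those of `E(C)` of Hamming weight `w v`.
-/

open Function

theorem Nat.card_image_and_of_injective {α β : Type*} {f : α → β} (hf : Injective f)
    (s : Set α) (p : β → Prop) :
    Nat.card {y // y ∈ f '' s ∧ p y} = Nat.card {x // x ∈ s ∧ p (f x)} := by
  calc Nat.card {y // y ∈ f '' s ∧ p y} = Nat.card (f '' (s ∩ f ⁻¹' {y | p y})) := by
        rw [Set.image_inter_preimage]; rfl
    _ = Nat.card {x // x ∈ s ∧ p (f x)} := Nat.card_image_of_injective hf _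

section HammingWeight

variable {ι κ R : Type*}

theorem hWt_zero [Zero R] : hWt (0 : ι → R) = 0 := by
  simp [hWt]

variable {M : Type*} [Ring R] [AddCommGroup M] [Module R M] {w : ℕ}

theorem LinearMap.injective_of_hWt_eq {φ : M →ₗ[R] (κ → R)} (hw : w ≠ 0)
    (hφ : ∀ a, a ≠ 0 → hWt (φ a) = w) : Injective φ := by
  refine (injective_iff_map_eq_zero φ).2 fun a ha => ?_
  by_contra hne
  exact hw (by rw [← hφ a hne, ha, hWt_zero])

def supportEquivSigma (u : ι → κ → R) (x : ι → M) (hu : ∀ i, x i = 0 → u i = 0) :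
    {p : ι × κ | u p.1 p.2 ≠ 0} ≃ Σ i : {i | x i ≠ 0}, {k | u i k ≠ 0} where
  toFun p := ⟨⟨p.1.1, fun h => p.2 (by simp [hu _ h])⟩, ⟨p.1.2, p.2⟩⟩
  invFun ik := ⟨(ik.1, ik.2), ik.2.2⟩
  left_inv _ := rfl
  right_inv _ := rfl

/-- The support is `{i | x i ≠ 0} × Fin w` up to equivalence, so the identity also holds for
infinite `ι`, where both sides are `0` by the `Nat.card` convention. -/
theorem hWt_map_blocks [Finite κ] {φ : M →ₗ[R] (κ → R)}
    (hφ : ∀ a, a ≠ 0 → hWt (φ a) = w) (x : ι → M) :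
    hWt (fun p : ι × κ => φ (x p.1) p.2) = w * Nat.card {i | x i ≠ 0} := by
  have hblock (i : {i | x i ≠ 0}) : Nat.card {k | φ (x i) k ≠ 0} = w := hφ _ i.2
  rw [hWt, Nat.card_congr ((supportEquivSigma (fun i => φ (x i)) x fun i h => by simp [h]).trans
    (Equiv.sigmaEquivProdOfEquiv fun i => Finite.equivFinOfCardEq (hblock i))),
    Nat.card_prod, Nat.card_fin, mul_comm]

end HammingWeight

section Window

variable {n b N : ℕ} {F : Type*}

def window (b : ℕ) (c : ZMod n → F) (i : ZMod n) : Fin b → F :=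
  fun j => c (i + ((j : ℕ) : ZMod n))

theorem window_ne_zero_iff [Zero F] {c : ZMod n → F} {i : ZMod n} :
    window b c i ≠ 0 ↔ ∃ j < b, c (i + (j : ZMod n)) ≠ 0 := by
  simp [window, funext_iff, Fin.exists_iff]

theorem bWt_eq_card_window_ne_zero [Zero F] (c : ZMod n → F) :
    bWt b c = Nat.card {i | window b c i ≠ 0} := by
  simp only [bWt, window_ne_zero_iff]

theorem window_injective (hb : 0 < b) : Injective (window (n := n) (F := F) b) := by
  intro c c' h
  funext i
  simpa [window] using congrFun (congrFun h i) ⟨0, hb⟩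

variable [Semiring F]

def concatenate (φ : (Fin b → F) →ₗ[F] (Fin N → F)) (c : ZMod n → F) : ZMod n × Fin N → F :=
  fun p => φ (window b c p.1) p.2

theorem concatenate_injective (hb : 0 < b) {φ : (Fin b → F) →ₗ[F] (Fin N → F)}
    (hφ : Injective φ) : Injective (concatenate (n := n) φ) := by
  intro c c' h
  exact window_injective hb <| funext fun i => hφ <| funext fun k => congrFun h (i, k)

end Window

theorem stmt3_general (b n N w v : ℕ) (hb : 0 < b) (hw : 0 < w)
    (F : Type*) [Field F]
    (φ : (Fin b → F) →ₗ[F] (Fin N → F))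
    (hφ : ∀ a : Fin b → F, a ≠ 0 → hWt (φ a) = w)
    (C : Submodule F (ZMod n → F)) :
    Nat.card {c : ZMod n → F // c ∈ C ∧ bWt b c = v}
      = Nat.card {u : ZMod n × Fin N → F //
          u ∈ (fun c : ZMod n → F => fun p : ZMod n × Fin N =>
                φ (fun j : Fin b => c (p.1 + ((j : ℕ) : ZMod n))) p.2) '' (C : Set (ZMod n → F))
          ∧ hWt u = w * v} := by
  have hwt (c : ZMod n → F) : hWt (concatenate φ c) = w * bWt b c := by
    rw [bWt_eq_card_window_ne_zero]
    exact hWt_map_blocks hφ _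
  change _ = Nat.card {u // u ∈ concatenate φ '' (C : Set (ZMod n → F)) ∧ hWt u = w * v}
  rw [Nat.card_image_and_of_injective
    (concatenate_injective hb (φ.injective_of_hWt_eq hw.ne' hφ))]
  simp only [hwt, Nat.mul_left_cancel_iff hw, SetLike.mem_coe]

/-- For a linear code `C ⊆ F_q^n` and the concatenated code
`E(C) = { (φ(c̄_0), …, φ(c̄_{n-1})) : c ∈ C }`, the number of codewords `c ∈ C` with
`wt_b(c) = v` equals the number of `u ∈ E(C)` with `wt_H(u) = w·v`. -/
theorem stmt3 (q b n N w v : ℕ) (hb : 0 < b) (hbn : b ≤ n) (hN : 0 < N) (hw : 0 < w)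
    (F : Type*) [Field F] [Fintype F] (hF : Fintype.card F = q)
    (φ : (Fin b → F) →ₗ[F] (Fin N → F))
    (hφ : ∀ a : Fin b → F, a ≠ 0 → hWt (φ a) = w)
    (C : Submodule F (ZMod n → F)) :
    Nat.card {c : ZMod n → F // c ∈ C ∧ bWt b c = v}
      = Nat.card {u : ZMod n × Fin N → F //
          u ∈ (fun c : ZMod n → F => fun p : ZMod n × Fin N =>
                φ (fun j : Fin b => c (p.1 + ((j : ℕ) : ZMod n))) p.2) '' (C : Set (ZMod n → F))
          ∧ hWt u = w * v} :=
  stmt3_general b n N w v hb hw F φ hφ C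
end

section
/- Let q be a prime power and let s, k, m be positive integers with k ≥ 2 and gcd(k, q - 1) = 1. If there exists an F_q-linear code of length m and dimension k with minimum 2-symbol distance d_2, then there exists an F_q-linear code of length s·(q^k - 1)/(q - 1) + m and dimension k with minimum 2-symbol distance s·(q^k - q^{k-2})/(q - 1) + d_2. -/
/-!
Identify `D` with `K = 𝔽_{q^k}` through a linear isomorphism `ψ`, pick a coordinate `t` at
which `D` does not vanish identically, and let `f` be the functional `ψ c ↦ c t` on `K`. The
new codeword of `c` is the block `f (α ^ i * ψ c)`, `i < s n`, with `n = (q^k - 1)/(q - 1)`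
and `α` primitive, followed by `c` read cyclically from `t`. Since `α ^ n` is the norm of `α`,
a nonzero scalar, the zero pattern of the block has period `n`; together with `f (ψ c) = c t`
this makes the two junctions count exactly like the wrap-around pairs of the block and of `c`.
Two consecutive zeros at `i` mean `α ^ i * ψ c ∈ ker f ⊓ ker (f ∘ (α * ·))`, a subspace of
codimension `2` because `α ∉ F`; over `(q - 1) n = q^k - 1` steps the `α ^ i * ψ c` run
through `Kˣ` once, so each period contains `(q^{k-2} - 1)/(q - 1)` zero pairs. Hence every
nonzero codeword gains exactly `s (q^k - q^{k-2})/(q - 1)` in `2`-symbol weight.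
-/

open Module Function

theorem Nat.count_mul_of_periodic {p : ℕ → Prop} [DecidablePred p] {n : ℕ} (hp : Periodic p n)
    (s : ℕ) : count p (s * n) = s * count p n := by
  induction s with
  | zero => simp
  | succ s ih =>
    rw [succ_mul, count_add, ih, succ_mul]
    congr 2
    ext k
    rw [add_comm]
    simpa using hp.nat_mul s k

theorem Nat.count_congr {p q : ℕ → Prop} [DecidablePred p] [DecidablePred q] {n : ℕ}
    (h : ∀ i < n, p i ↔ q i) : count p n = count q n :=
  (count_mono_left fun i hi => (h i hi).1).antisymm (count_mono_left fun i hi => (h i hi).2)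

theorem Nat.pow_sub_one_div_add_pow_sub_pow_div {q : ℕ} (hq : 0 < q) {a b : ℕ} (hab : a ≤ b) :
    (q ^ a - 1) / (q - 1) + (q ^ b - q ^ a) / (q - 1) = (q ^ b - 1) / (q - 1) := by
  have h1 : 1 ≤ q ^ a := Nat.one_le_pow _ _ hq
  have h2 : q ^ a ≤ q ^ b := Nat.pow_le_pow_right hq hab
  rw [← Nat.add_div_of_dvd_right (by simpa using Nat.sub_dvd_pow_sub_pow q 1 a)]
  congr 1
  omega

open scoped Count in
theorem ZMod.natCard_setOf_eq_count {n : ℕ} [NeZero n] (p : ZMod n → Prop) [DecidablePred p] :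
    Nat.card {i : ZMod n | p i} = Nat.count (fun j => p j) n := by
  refine .trans ?_ (Nat.card_eq_fintype_card.trans (Nat.count_eq_card_fintype _ _).symm)
  exact Nat.card_congr
    { toFun i := ⟨i.1.val, i.1.val_lt, by rw [ZMod.natCast_zmod_val]; exact i.2⟩
      invFun j := ⟨j.1, j.2.2⟩
      left_inv i := Subtype.ext (ZMod.natCast_zmod_val i.1)
      right_inv j := Subtype.ext (ZMod.val_natCast_of_lt j.2.1) }

section ZeroPairs

variable {F : Type*} [Zero F] {n : ℕ}

noncomputable def zeroPairs (v : ZMod n → F) : ℕ :=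
  Nat.card {i : ZMod n | v i = 0 ∧ v (i + 1) = 0}

theorem bWt_two_add_zeroPairs [NeZero n] (v : ZMod n → F) : bWt 2 v + zeroPairs v = n := by
  have hset : {i : ZMod n | ∃ j : ℕ, j < 2 ∧ v (i + j) ≠ 0} =
      {i | v i = 0 ∧ v (i + 1) = 0}ᶜ := by
    ext i
    simp [Nat.le_one_iff_eq_zero_or_eq_one, or_and_right, exists_or]
    tauto
  rw [bWt, zeroPairs, hset, Nat.card_coe_set_eq, Nat.card_coe_set_eq, add_comm,
    Set.ncard_add_ncard_compl, Nat.card_zmod]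

theorem zeroPairs_add_left (v : ZMod n → F) (t : ZMod n) :
    zeroPairs (fun i => v (t + i)) = zeroPairs v :=
  Nat.card_congr <| (Equiv.addLeft t).subtypeEquiv fun i => by simp [add_assoc]

variable {m : ℕ}

def prependBlock (L : ℕ) (e : ℕ → F) (c : ZMod m → F) (t : ZMod m) : ZMod (L + m) → F :=
  fun i => if i.val < L then e i.val else c (t + (i.val - L : ℕ))

theorem eq_zero_of_prependBlock_eq_zero [NeZero m] {L : ℕ} {e : ℕ → F} {c : ZMod m → F}
    {t : ZMod m} (h : prependBlock L e c t = 0) : c = 0 := by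
  ext u
  have := congr_fun h ((L + (u - t).val : ℕ) : ZMod (L + m))
  rw [prependBlock, ZMod.val_natCast_of_lt (by have := (u - t).val_lt; omega)] at this
  simpa using this

variable [DecidableEq F]

theorem zeroPairs_comp_val [NeZero n] (e : ℕ → F) (he : e n = 0 ↔ e 0 = 0) :
    zeroPairs (fun i : ZMod n => e i.val) = Nat.count (fun i => e i = 0 ∧ e (i + 1) = 0) n := by
  rw [zeroPairs, ZMod.natCard_setOf_eq_count]
  refine Nat.count_congr fun i hi => ?_
  rw [ZMod.val_natCast_of_lt hi, ZMod.val_add, ZMod.val_natCast_of_lt hi, ZMod.val_one_eq_one_mod,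
    Nat.add_mod_mod]
  obtain h | h : i + 1 < n ∨ i + 1 = n := by omega
  · rw [Nat.mod_eq_of_lt h]
  · rw [h, Nat.mod_self, he]

theorem zeroPairs_prependBlock [NeZero m] (L : ℕ) (e : ℕ → F) (c : ZMod m → F) (t : ZMod m)
    (he0 : e 0 = c t) (heL : e L = 0 ↔ c t = 0) :
    zeroPairs (prependBlock L e c t) =
      Nat.count (fun i => e i = 0 ∧ e (i + 1) = 0) L + zeroPairs c := by
  set w : ℕ → F := fun j => if j < L then e j else c (t + (j - L : ℕ))
  have hw0 : w 0 = c t := by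
    rcases Nat.eq_zero_or_pos L with hL | hL <;> simp [w, hL, he0]
  have hwrap : w (L + m) = 0 ↔ w 0 = 0 := by simp [w, hw0]
  have hshift := zeroPairs_comp_val (n := m) (fun k => c (t + k)) (by simp)
  simp only [ZMod.natCast_zmod_val, zeroPairs_add_left] at hshift
  change zeroPairs (fun i : ZMod (L + m) => w i.val) = _
  rw [zeroPairs_comp_val w hwrap, Nat.count_add, hshift]
  congr 1
  · refine Nat.count_congr fun i hi => ?_
    obtain h | h : i + 1 < L ∨ i + 1 = L := by omega
    · simp [w, hi, h]
    · simp [w, hi, h, heL]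
  · congr 1
    ext k
    simp [w, add_assoc]

theorem bWt_two_prependBlock_add_count [NeZero m] (L : ℕ) (e : ℕ → F) (c : ZMod m → F)
    (t : ZMod m) (he0 : e 0 = c t) (heL : e L = 0 ↔ c t = 0) :
    bWt 2 (prependBlock L e c t) + Nat.count (fun i => e i = 0 ∧ e (i + 1) = 0) L =
      L + bWt 2 c := by
  have h1 := bWt_two_add_zeroPairs (prependBlock L e c t)
  have h2 := bWt_two_add_zeroPairs c
  rw [zeroPairs_prependBlock L e c t he0 heL] at h1
  omega

end ZeroPairs

theorem isLeast_bWt_range_of_bWt_eq_add {F : Type*} [Semiring F] {m n b a d : ℕ}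
    {D : Submodule F (ZMod m → F)}
    (Φ : D →ₗ[F] (ZMod n → F)) (hΦ : Injective Φ)
    (hw : ∀ c : D, c ≠ 0 → bWt b (Φ c) = a + bWt b (c : ZMod m → F))
    (hD : IsLeast {w | ∃ c ∈ D, c ≠ 0 ∧ bWt b c = w} d) :
    IsLeast {w | ∃ c ∈ LinearMap.range Φ, c ≠ 0 ∧ bWt b c = w} (a + d) := by
  obtain ⟨⟨c, hcD, hc0, rfl⟩, hmin⟩ := hD
  have hc : (⟨c, hcD⟩ : D) ≠ 0 := by simpa using hc0
  refine ⟨⟨Φ ⟨c, hcD⟩, LinearMap.mem_range_self _ _, (map_ne_zero_iff _ hΦ).2 hc, hw _ hc⟩, ?_⟩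
  rintro _ ⟨_, ⟨c', rfl⟩, hc', rfl⟩
  have hc'0 : c' ≠ 0 := by rintro rfl; simp at hc'
  rw [hw c' hc'0]
  exact Nat.add_le_add_left (hmin ⟨c', c'.2, by simpa using hc'0, rfl⟩) a

theorem finrank_ker_inf_ker {F V : Type*} [Field F] [AddCommGroup V] [Module F V]
    [FiniteDimensional F V] {f g : Dual F V} (h : LinearIndependent F ![f, g]) :
    finrank F (LinearMap.ker f ⊓ LinearMap.ker g : Submodule F V) = finrank F V - 2 := by
  have hker : (Submodule.span F (Set.range ![f, g])).dualCoannihilator =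
      LinearMap.ker f ⊓ LinearMap.ker g := by
    refine SetLike.coe_injective ?_
    rw [Submodule.coe_dualCoannihilator_span]
    ext v
    simp [Matrix.range_cons, Set.range_unique, and_comm]
  have := Subspace.finrank_add_finrank_dualCoannihilator_eq (Submodule.span F (Set.range ![f, g]))
  rw [hker, finrank_span_eq_card h, Fintype.card_fin] at this
  omega

section FieldExtension

variable {F K : Type*} [Field F] [Field K] [Algebra F K]

theorem linearIndependent_comp_mulLeft {f : K →ₗ[F] F} (hf : f ≠ 0) {α : K}
    (hα : α ∉ Set.range (algebraMap F K)) :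
    LinearIndependent F ![f, f ∘ₗ LinearMap.mulLeft F α] := by
  rw [LinearIndependent.pair_iff]
  intro a b hab
  set u := algebraMap F K a + algebraMap F K b * α
  have hfu (y : K) : f (u * y) = 0 := by
    simpa [u, add_mul, mul_assoc, ← Algebra.smul_def] using congr($hab y)
  have hu : u = 0 := by
    by_contra hu
    exact hf <| LinearMap.ext fun y => by simpa [mul_inv_cancel_left₀ hu] using hfu (u⁻¹ * y)
  have hb : b = 0 := by
    by_contra hb
    refine hα ⟨-a / b, ?_⟩
    rw [map_div₀, map_neg, div_eq_iff (by simpa using hb)]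
    linear_combination -hu
  subst hb
  simpa [u] using hu

variable [Finite K]

theorem notMem_range_algebraMap_of_orderOf_eq (hk : 2 ≤ finrank F K) {α : K}
    (hα : orderOf α = Nat.card K - 1) : α ∉ Set.range (algebraMap F K) := by
  have : Finite F := Finite.of_injective _ (algebraMap F K).injective
  have : Fintype F := Fintype.ofFinite F
  rintro ⟨a, rfl⟩
  have hq : 1 < Nat.card F := Finite.one_lt_card
  have hK : Nat.card F < Nat.card K := by
    rw [Module.natCard_eq_pow_finrank (K := F) (V := K)]
    simpa using Nat.pow_lt_pow_right hq (show 1 < finrank F K by omega)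
  have ha : a ≠ 0 := by
    rintro rfl
    rw [map_zero, orderOf_zero] at hα
    omega
  have hdvd : orderOf (algebraMap F K a) ∣ Nat.card F - 1 := orderOf_dvd_of_pow_eq_one <| by
    rw [← map_pow, ← Fintype.card_eq_nat_card, FiniteField.pow_card_sub_one_eq_one a ha, map_one]
  have := Nat.le_of_dvd (by omega) hdvd
  omega

open Finset in
theorem count_pow_mul_mem {α : K} (hα : orderOf α = Nat.card K - 1) {x : K} (hx : x ≠ 0)
    (S : Set K) [DecidablePred (· ∈ S)] (h0 : (0 : K) ∈ S) :
    Nat.count (fun i => α ^ i * x ∈ S) (Nat.card K - 1) = Nat.card S - 1 := by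
  classical
  have : Fintype K := Fintype.ofFinite K
  have hα0 : α ≠ 0 := by
    rintro rfl
    rw [orderOf_zero] at hα
    have : 1 < Nat.card K := Finite.one_lt_card
    omega
  have hinj : Set.InjOn (fun i => α ^ i * x) (range (Nat.card K - 1)) := fun i hi j hj h =>
    pow_injOn_Iio_orderOf (by simpa [hα] using hi) (by simpa [hα] using hj)
      (mul_right_cancel₀ hx h)
  have himage : (range (Nat.card K - 1)).image (fun i => α ^ i * x) = univ.erase 0 := by
    refine eq_of_subset_of_card_le (fun y hy => ?_) ?_
    · obtain ⟨i, -, rfl⟩ := mem_image.1 hy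
      simp [hα0, hx]
    · rw [card_image_of_injOn hinj, card_erase_of_mem (mem_univ _), card_univ, card_range,
        Fintype.card_eq_nat_card]
  rw [Nat.count_eq_card_filter_range, ← card_image_of_injOn (hinj.mono (filter_subset _ _)),
    ← filter_image, himage, filter_erase, card_erase_of_mem (by simpa using h0),
    ← Fintype.card_subtype, Fintype.card_eq_nat_card]

theorem map_pow_mul_eq_zero_iff (f : K →ₗ[F] F) {α : K} (hα : α ≠ 0) (y : K) (s : ℕ) :
    f (α ^ (s * ((Nat.card K - 1) / (Nat.card F - 1))) * y) = 0 ↔ f y = 0 := by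
  rw [pow_mul', ← FiniteField.algebraMap_norm_eq_pow, ← map_pow, ← Algebra.smul_def, map_smul,
    smul_eq_mul, mul_eq_zero, or_iff_right (pow_ne_zero _ (Algebra.norm_ne_zero_iff.2 hα))]

theorem count_zeroPair_pow_mul [DecidableEq F] (hk : 2 ≤ finrank F K) {α : K}
    (hα : orderOf α = Nat.card K - 1) {f : K →ₗ[F] F} (hf : f ≠ 0) {x : K} (hx : x ≠ 0)
    (s : ℕ) :
    Nat.count (fun i => f (α ^ i * x) = 0 ∧ f (α ^ (i + 1) * x) = 0)
        (s * ((Nat.card K - 1) / (Nat.card F - 1))) =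
      s * ((Nat.card F ^ (finrank F K - 2) - 1) / (Nat.card F - 1)) := by
  classical
  have : Finite F := Finite.of_injective _ (algebraMap F K).injective
  have hq : 1 < Nat.card F := Finite.one_lt_card
  set n := (Nat.card K - 1) / (Nat.card F - 1)
  have hαF := notMem_range_algebraMap_of_orderOf_eq hk hα
  have hα0 : α ≠ 0 := fun h => hαF ⟨0, by rw [h, map_zero]⟩
  have hper : Periodic (fun i => f (α ^ i * x) = 0 ∧ f (α ^ (i + 1) * x) = 0) n := fun i => by
    have key (j : ℕ) : f (α ^ (j + n) * x) = 0 ↔ f (α ^ j * x) = 0 := by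
      have := map_pow_mul_eq_zero_iff f hα0 (α ^ j * x) 1
      rwa [one_mul, ← mul_assoc, ← pow_add, add_comm] at this
    dsimp only
    rw [add_right_comm i n 1, key, key]
  set T := LinearMap.ker f ⊓ LinearMap.ker (f ∘ₗ LinearMap.mulLeft F α)
  have hT (i : ℕ) : (f (α ^ i * x) = 0 ∧ f (α ^ (i + 1) * x) = 0) ↔ α ^ i * x ∈ T := by
    simp [T, pow_succ', mul_assoc]
  have hdvd : Nat.card F - 1 ∣ Nat.card K - 1 := by
    simpa [Module.natCard_eq_pow_finrank (K := F) (V := K)] using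
      Nat.sub_dvd_pow_sub_pow (Nat.card F) 1 (finrank F K)
  have hcount : (Nat.card F - 1) * Nat.count (fun i => f (α ^ i * x) = 0 ∧
      f (α ^ (i + 1) * x) = 0) n = Nat.card F ^ (finrank F K - 2) - 1 := by
    rw [← Nat.count_mul_of_periodic hper, Nat.mul_div_cancel' hdvd,
      Nat.count_congr fun i _ => hT i]
    refine (count_pow_mul_mem hα hx (T : Set K) T.zero_mem).trans ?_
    rw [SetLike.coe_sort_coe, Module.natCard_eq_pow_finrank (K := F) (V := T),
      finrank_ker_inf_ker (linearIndependent_comp_mulLeft hf hαF)]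
  rw [Nat.count_mul_of_periodic hper, ← hcount, Nat.mul_div_cancel_left _ (by omega)]

theorem exists_injective_bWt_two_eq_add {k : ℕ} (hk : 2 ≤ k) (hK : finrank F K = k) {m : ℕ}
    [NeZero m] (D : Submodule F (ZMod m → F)) (hD : finrank F D = k) (s : ℕ) :
    ∃ Φ : D →ₗ[F] (ZMod (s * ((Nat.card F ^ k - 1) / (Nat.card F - 1)) + m) → F),
      Injective Φ ∧ ∀ c : D, c ≠ 0 →
        bWt 2 (Φ c) = s * ((Nat.card F ^ k - Nat.card F ^ (k - 2)) / (Nat.card F - 1)) +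
          bWt 2 (c : ZMod m → F) := by
  classical
  have : Finite F := Finite.of_injective _ (algebraMap F K).injective
  have hcardK : Nat.card K = Nat.card F ^ k := by rw [Module.natCard_eq_pow_finrank (K := F), hK]
  set L := s * ((Nat.card F ^ k - 1) / (Nat.card F - 1))
  obtain ⟨g, hg⟩ := IsCyclic.exists_ofOrder_eq_natCard (α := Kˣ)
  have hα : orderOf (g : K) = Nat.card K - 1 := by rw [orderOf_units, hg, Nat.card_units]
  obtain ⟨c₀, hc₀D, hc₀⟩ := Submodule.exists_mem_ne_zero_of_ne_bot (p := D) <| by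
    rintro rfl
    rw [finrank_bot] at hD
    omega
  obtain ⟨t, ht⟩ := Function.ne_iff.1 hc₀
  let ψ : D ≃ₗ[F] K := LinearEquiv.ofFinrankEq _ _ (hD.trans hK.symm)
  let f : K →ₗ[F] F := LinearMap.proj t ∘ₗ D.subtype ∘ₗ ψ.symm.toLinearMap
  have hf (c : D) : f (ψ c) = (c : ZMod m → F) t := by simp [f]
  have hf0 : f ≠ 0 := fun h => ht (by simpa [h] using (hf ⟨c₀, hc₀D⟩).symm)
  let Φ : D →ₗ[F] (ZMod (L + m) → F) := LinearMap.pi fun i =>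
    if i.val < L then f ∘ₗ LinearMap.mulLeft F ((g : K) ^ i.val) ∘ₗ ψ.toLinearMap
    else LinearMap.proj (t + ((i.val - L : ℕ) : ZMod m)) ∘ₗ D.subtype
  have hΦ (c : D) : Φ c = prependBlock L (fun i => f ((g : K) ^ i * ψ c)) c t := by
    ext i
    simp only [Φ, LinearMap.pi_apply, prependBlock]
    split_ifs <;> rfl
  refine ⟨Φ, ?_, fun c hc => ?_⟩
  · rw [← LinearMap.ker_eq_bot, eq_bot_iff]
    intro c hc
    rw [Submodule.mem_bot, ← Submodule.coe_eq_zero]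
    exact eq_zero_of_prependBlock_eq_zero ((hΦ c).symm.trans hc)
  · have hx : ψ c ≠ 0 := by simpa using hc
    have heL := map_pow_mul_eq_zero_iff f (Units.ne_zero g) (ψ c) s
    have hcount := count_zeroPair_pow_mul (hK ▸ hk) hα hf0 hx s
    rw [hcardK] at heL
    rw [hcardK, hK] at hcount
    have hw := bWt_two_prependBlock_add_count L (fun i => f ((g : K) ^ i * ψ c)) c t
      (by simp [hf]) (by rw [← hf c]; exact heL)
    rw [hcount] at hw
    have hsum := Nat.pow_sub_one_div_add_pow_sub_pow_div
      (Nat.one_pos.trans (Finite.one_lt_card (α := F))) (Nat.sub_le k 2)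
    have hL : s * ((Nat.card F ^ (k - 2) - 1) / (Nat.card F - 1)) +
        s * ((Nat.card F ^ k - Nat.card F ^ (k - 2)) / (Nat.card F - 1)) = L := by
      rw [← mul_add, hsum]
    rw [hΦ]
    omega

end FieldExtension

theorem stmt9_general (q s k m d : ℕ) (hk : 2 ≤ k) (hm : 0 < m)
    (F : Type*) [Field F] [Fintype F] (hF : Fintype.card F = q)
    (D : Submodule F (ZMod m → F)) (hdimD : Module.finrank F D = k)
    (hD : IsLeast {w | ∃ c ∈ D, c ≠ 0 ∧ bWt 2 c = w} d) :
    ∃ C : Submodule F (ZMod (s * ((q ^ k - 1) / (q - 1)) + m) → F),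
      Module.finrank F C = k ∧
      IsLeast {w | ∃ c ∈ C, c ≠ 0 ∧ bWt 2 c = w}
        (s * ((q ^ k - q ^ (k - 2)) / (q - 1)) + d) := by
  obtain ⟨p, _⟩ := CharP.exists F
  have : Fact p.Prime := ⟨CharP.char_is_prime F p⟩
  have : NeZero k := ⟨by omega⟩
  have : NeZero m := ⟨hm.ne'⟩
  obtain ⟨Φ, hΦ, hw⟩ := exists_injective_bWt_two_eq_add (K := FiniteField.Extension F p k) hk
    (FiniteField.finrank_extension F p k) D hdimD s
  rw [Fintype.card_eq_nat_card] at hF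
  subst hF
  exact ⟨LinearMap.range Φ, (LinearMap.finrank_range_of_inj hΦ).trans hdimD,
    isLeast_bWt_range_of_bWt_eq_add Φ hΦ hw hD⟩

/-- If `gcd(k, q-1) = 1`, `k ≥ 2`, and there exists an `(m, k, d_2)^2_q` linear code, then
there exists an `(s·(q^k-1)/(q-1) + m, k, s·(q^k - q^{k-2})/(q-1) + d_2)^2_q` linear code. -/
theorem stmt9 (q s k m d : ℕ) (hs : 0 < s) (hk : 2 ≤ k) (hm : 0 < m)
    (hgcd : Nat.gcd k (q - 1) = 1)
    (F : Type*) [Field F] [Fintype F] (hF : Fintype.card F = q)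
    (D : Submodule F (ZMod m → F)) (hdimD : Module.finrank F D = k)
    (hD : IsLeast {w | ∃ c ∈ D, c ≠ 0 ∧ bWt 2 c = w} d) :
    ∃ C : Submodule F (ZMod (s * ((q ^ k - 1) / (q - 1)) + m) → F),
      Module.finrank F C = k ∧
      IsLeast {w | ∃ c ∈ C, c ≠ 0 ∧ bWt 2 c = w}
        (s * ((q ^ k - q ^ (k - 2)) / (q - 1)) + d) :=
  stmt9_general q s k m d hk hm F hF D hdimD hD
end
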